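/- arXiv:2101.04344 — 5 statements merged into one kernel-verified Lean document; each statement's English description precedes it below -/
import Mathlib

section
/- Let μ = α + iβ be a complex number with α > 0, β ≥ 0, and let z = x + 2iM₀ ln|x| with x real, |x| > 2, M₀ > 0, and suppose β ≤ M₀ ln α and α ≤ x⁴ with α > 1. Then |1 - z/μ| ≤ |1 - z/α|. -/
open Complex

theorem stmt1 (α β x M₀ : ℝ) (hM₀ : 0 < M₀) (hα : 1 < α) (hβ0 : 0 ≤ β)
    (hβ : β ≤ M₀ * Real.log α) (hx : 2 < |x|) (hα4 : α ≤ x ^ 4) :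
    ‖1 - ((x : ℂ) + 2 * (M₀ : ℂ) * (Real.log |x| : ℂ) * Complex.I) /
        ((α : ℂ) + Complex.I * (β : ℂ))‖ ≤
      ‖1 - ((x : ℂ) + 2 * (M₀ : ℂ) * (Real.log |x| : ℂ) * Complex.I) / (α : ℂ)‖ := by
  set t : ℝ := 2 * M₀ * Real.log |x| with ht
  have hx0 : (0:ℝ) < |x| := lt_trans two_pos hx
  have hlogx : 0 < Real.log |x| := Real.log_pos (lt_trans one_lt_two hx)
  have ht0 : 0 ≤ t := by positivity
  have hα0 : (0:ℝ) < α := lt_trans one_pos hα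
  -- β ≤ 2t
  have hx4 : x ^ 4 = |x| ^ 4 := by
    rw [← _root_.abs_pow]; exact (_root_.abs_of_nonneg (by positivity)).symm
  have hlogα : Real.log α ≤ 4 * Real.log |x| := by
    calc Real.log α ≤ Real.log (x ^ 4) := Real.log_le_log hα0 hα4
    _ = 4 * Real.log |x| := by rw [hx4, Real.log_pow]; push_cast; ring
  have hβ2t : β ≤ 2 * t := by
    calc β ≤ M₀ * Real.log α := hβ
    _ ≤ M₀ * (4 * Real.log |x|) := by nlinarith
    _ = 2 * t := by rw [ht]; ring
  have hμ : ((α : ℂ) + Complex.I * (β : ℂ)) ≠ 0 := by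
    intro h
    have := congrArg Complex.re h
    simp at this
    linarith
  have hαc : ((α : ℂ)) ≠ 0 := by
    exact_mod_cast (ne_of_gt hα0)
  have hz : ((x : ℂ) + 2 * (M₀ : ℂ) * (Real.log |x| : ℂ) * Complex.I) = (x : ℂ) + (t : ℂ) * Complex.I := by
    rw [ht]; push_cast; ring
  rw [hz, one_sub_div hμ, one_sub_div hαc, norm_div, norm_div]
  have habsμ : 0 < ‖((α : ℂ) + Complex.I * (β : ℂ))‖ := by
    exact norm_pos_iff.mpr hμ
  have habsα : 0 < ‖((α : ℂ))‖ := by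
    exact norm_pos_iff.mpr hαc
  rw [div_le_div_iff₀ habsμ habsα]
  apply le_of_pow_le_pow_left₀ (n := 2) (by norm_num) (by positivity)
  rw [mul_pow, mul_pow, Complex.sq_norm, Complex.sq_norm, Complex.sq_norm, Complex.sq_norm]
  simp only [Complex.normSq_apply, Complex.sub_re, Complex.sub_im, Complex.add_re, Complex.add_im,
    Complex.mul_re, Complex.mul_im, Complex.I_re, Complex.I_im, Complex.ofReal_re, Complex.ofReal_im]
  ring_nf
  have hβ2t' : β ≤ 4 * M₀ * Real.log |x| := by rw [ht] at hβ2t; linarith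
  nlinarith [mul_nonneg (sq_nonneg β) (sq_nonneg (α - x)),
    mul_nonneg (mul_nonneg (sq_nonneg α) hβ0) (sub_nonneg.2 hβ2t'),
    sq_nonneg (β * M₀ * Real.log |x|)]
end

section
/- Let μ = α + iβ with α > 1, 0 ≤ β ≤ M₀ ln α, and let z = x + 2iM₀ ln|x| with |x| > 2 and α > x⁴. Then |1 - z/μ| ≤ |1 - z/α| · (1 + 4M₀² ln²α / α²)^{1/2}. -/
open Complex

set_option maxHeartbeats 1000000 in
theorem stmt2 (α β x M₀ : ℝ) (hM₀ : 0 < M₀) (hα : 1 < α) (hβ0 : 0 ≤ β)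
    (hβ : β ≤ M₀ * Real.log α) (hx : 2 < |x|) (hα4 : x ^ 4 < α) :
    ‖(1 - ((x : ℂ) + 2 * (M₀ : ℂ) * (Real.log |x| : ℂ) * Complex.I) /
        ((α : ℂ) + Complex.I * (β : ℂ)))‖ ≤
      ‖(1 - ((x : ℂ) + 2 * (M₀ : ℂ) * (Real.log |x| : ℂ) * Complex.I) / (α : ℂ))‖ *
        Real.sqrt (1 + 4 * M₀ ^ 2 * (Real.log α) ^ 2 / α ^ 2) := by
  have hα0 : (0:ℝ) < α := by linarith
  set L := Real.log α with hLdef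
  set y := 2 * M₀ * Real.log |x| with hydef
  have hx1 : (1:ℝ) < |x| := by linarith
  have hlogx : 0 < Real.log |x| := Real.log_pos hx1
  have hy0 : 0 < y := by positivity
  have hL0 : 0 < L := Real.log_pos hα
  have hx4 : (16:ℝ) < x ^ 4 := by nlinarith [abs_nonneg x, _root_.sq_abs x, sq_nonneg (|x|^2 - 4)]
  have hα16 : (16:ℝ) < α := by linarith
  -- x < α / 2
  have hx2 : x < α / 2 := by
    nlinarith [le_abs_self x, _root_.sq_abs x, sq_nonneg x, sq_nonneg (x^2 - 4), abs_nonneg x]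
  -- 4 log |x| < L
  have hlog4 : 4 * Real.log |x| < L := by
    have : Real.log (|x| ^ 4) < L := by
      apply Real.log_lt_log (by positivity)
      rw [← _root_.abs_pow]
      calc |x ^ 4| = x ^ 4 := abs_of_pos (by linarith)
        _ < α := hα4
    simpa [Real.log_pow] using this
  have hyML : y < M₀ * L / 2 := by
    rw [hydef]; nlinarith
  have hβML : β ≤ M₀ * L := hβ
  clear_value y L
  set z : ℂ := (x : ℂ) + 2 * (M₀ : ℂ) * (Real.log |x| : ℂ) * Complex.I with hzdef
  set μ : ℂ := (α : ℂ) + Complex.I * (β : ℂ) with hμdef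
  have hμre : μ.re = α := by simp [hμdef]
  have hμne : μ ≠ 0 := by
    intro h
    rw [h] at hμre
    simp at hμre
    linarith
  have hαne : (α : ℂ) ≠ 0 := by exact_mod_cast hα0.ne'
  have e1 : 1 - z / μ = (μ - z) / μ := by
    rw [sub_div, div_self hμne]
  have e2 : 1 - z / (α:ℂ) = ((α:ℂ) - z) / (α:ℂ) := by
    rw [sub_div, div_self hαne]
  rw [e1, e2, norm_div, norm_div]
  have habsα : ‖(α:ℂ)‖ = α := by
    simp [abs_of_pos hα0]
  rw [habsα]
  have hμabs : α ≤ ‖μ‖ := by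
    calc α = |μ.re| := by rw [hμre]; exact (abs_of_pos hα0).symm
      _ ≤ ‖μ‖ := Complex.abs_re_le_norm μ
  -- squared norms
  have hA : (‖μ - z‖)^2 = (α - x)^2 + (β - y)^2 := by
    rw [Complex.sq_norm, Complex.normSq_apply]
    simp [hμdef, hzdef, Complex.sub_re, Complex.add_re, Complex.mul_re, Complex.mul_im,
      Complex.sub_im, Complex.add_im, hydef]
    ring
  have hB : (‖(α:ℂ) - z‖)^2 = (α - x)^2 + y^2 := by
    rw [Complex.sq_norm, Complex.normSq_apply]
    simp [hzdef, Complex.sub_re, Complex.add_re, Complex.mul_re, Complex.mul_im,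
      Complex.sub_im, Complex.add_im, hydef]
    ring
  have hC0 : (0:ℝ) ≤ 1 + 4 * M₀ ^ 2 * L ^ 2 / α ^ 2 := by positivity
  -- main squared inequality
  have key : (‖μ - z‖)^2 ≤ (‖(α:ℂ) - z‖)^2 * (1 + 4 * M₀ ^ 2 * L ^ 2 / α ^ 2) := by
    rw [hA, hB]
    have hrw : (1 + 4 * M₀ ^ 2 * L ^ 2 / α ^ 2) = (α^2 + 4 * M₀ ^ 2 * L ^ 2) / α ^ 2 := by
      field_simp
    rw [hrw, ← mul_div_assoc, le_div_iff₀ (by positivity)]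
    have h5 : α^2/4 ≤ (α-x)^2 := by nlinarith
    have h6 : β^2 ≤ (M₀*L)^2 := by nlinarith
    have h7 : 4*M₀^2*L^2 * (α^2/4) ≤ 4*M₀^2*L^2 * (α-x)^2 :=
      mul_le_mul_of_nonneg_left h5 (by positivity)
    have h8 : β^2 * α^2 ≤ (M₀*L)^2 * α^2 :=
      mul_le_mul_of_nonneg_right h6 (sq_nonneg α)
    have h9 : 0 ≤ 2*β*y*α^2 := by positivity
    have h10 : 0 ≤ y^2 * (4*M₀^2*L^2) := by positivity
    nlinarith [h7, h8, h9, h10]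
  have hmain : ‖μ - z‖ ≤ ‖(α:ℂ) - z‖ * Real.sqrt (1 + 4 * M₀ ^ 2 * L ^ 2 / α ^ 2) := by
    have h1 : ‖μ - z‖ = Real.sqrt ((‖μ - z‖)^2) :=
      (Real.sqrt_sq (norm_nonneg _)).symm
    rw [h1]
    have h2 : ‖(α:ℂ) - z‖ * Real.sqrt (1 + 4 * M₀ ^ 2 * L ^ 2 / α ^ 2)
        = Real.sqrt ((‖(α:ℂ) - z‖)^2 * (1 + 4 * M₀ ^ 2 * L ^ 2 / α ^ 2)) := by
      rw [Real.sqrt_mul (sq_nonneg _), Real.sqrt_sq (norm_nonneg _)]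
    rw [h2]
    exact Real.sqrt_le_sqrt key
  calc ‖μ - z‖ / ‖μ‖ ≤ ‖μ - z‖ / α := by
        gcongr
    _ ≤ (‖(α:ℂ) - z‖ * Real.sqrt (1 + 4 * M₀ ^ 2 * L ^ 2 / α ^ 2)) / α := by
        gcongr
    _ = ‖(α:ℂ) - z‖ / α * Real.sqrt (1 + 4 * M₀ ^ 2 * L ^ 2 / α ^ 2) := by ring
end

section
/- Let φ be an entire function with only real zeros, invertible in the sense of Ehrenpreis (slowly decreasing), i.e., there exists a > 0 such that for every real x there is x' with |x - x'| ≤ a·ln(a + |x|) and |φ(x')| ≥ (a + |x'|)^{-a}. If additionally φ is bounded on ℝ and of exponential type 1, then the number m(x,1) of zeros of φ (with multiplicity) in the closed disc of radius 1 centered at x satisfies limsup_{|x|→∞} m(x,1)/ln|x| < ∞. -/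
open Complex Classical

/-- The multiplicity of `z` as a zero of `φ` (0 if `φ` is not analytic at `z` or has
infinite order there). -/
noncomputable def ordAt (φ : ℂ → ℂ) (z : ℂ) : ℕ :=
  if h : AnalyticAt ℂ φ z then (analyticOrderAt φ z).toNat else 0

/-- Number of zeros of `φ`, counted with multiplicity, in the closed disc of radius `t`
centered at the real point `x`. -/
noncomputable def mcount (φ : ℂ → ℂ) (x t : ℝ) : ℝ :=
  ∑' z : {w : ℂ | φ w = 0 ∧ ‖w - (x : ℂ)‖ ≤ t}, (ordAt φ z : ℝ)

/-- `φ` is slowly decreasing (invertible in the sense of Ehrenpreis). -/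
def SlowlyDecreasing (φ : ℂ → ℂ) : Prop :=
  ∃ a > (0 : ℝ), ∀ x : ℝ, ∃ x' : ℝ, |x - x'| ≤ a * Real.log (a + |x|) ∧
    (a + |x'|) ^ (-a : ℝ) ≤ ‖φ (x' : ℂ)‖

/-- `f` has exponential type at most `τ`. -/
def ExpTypeLE (f : ℂ → ℂ) (τ : ℝ) : Prop :=
  ∀ ε > (0 : ℝ), ∃ C : ℝ, ∀ z : ℂ, ‖f z‖ ≤ C * Real.exp ((τ + ε) * ‖z‖)

open Filter Set


lemma dslope_entire {f : ℂ → ℂ} (hf : Differentiable ℂ f) (w₀ : ℂ) :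
    Differentiable ℂ (dslope f w₀) := by
  intro z
  rcases eq_or_ne z w₀ with rfl | hz
  · obtain ⟨p, hp⟩ := hf.analyticAt z
    exact (hp.has_fpower_series_dslope_fslope).analyticAt.differentiableAt
  · exact (differentiableAt_dslope_of_ne hz).mpr (hf z)

lemma dslope_factor {f : ℂ → ℂ} {w₀ : ℂ} (h0 : f w₀ = 0) (z : ℂ) :
    f z = (z - w₀) * dslope f w₀ z := by
  have := sub_smul_dslope f w₀ z
  rw [h0, sub_zero, smul_eq_mul] at this
  exact this.symm

lemma not_locally_zero {f : ℂ → ℂ} (hf : Differentiable ℂ f) {c : ℂ} (hc : f c ≠ 0) (w : ℂ) :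
    ¬ ∀ᶠ z in nhds w, f z = 0 := by
  intro h
  have hA : AnalyticOnNhd ℂ f Set.univ := fun z _ => hf.analyticAt z
  exact hc (hA.eqOn_zero_of_preconnected_of_eventuallyEq_zero isPreconnected_univ
    (Set.mem_univ w) h (Set.mem_univ c))

lemma ordAt_eq_of {w : ℂ} {f : ℂ → ℂ} (hf : AnalyticAt ℂ f w) {n : ℕ} {g : ℂ → ℂ}
    (hg : AnalyticAt ℂ g w) (hgne : g w ≠ 0)
    (heq : ∀ᶠ z in nhds w, f z = (z - w) ^ n * g z) : ordAt f w = n := by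
  have h : analyticOrderAt f w = n := hf.analyticOrderAt_eq_natCast.mpr ⟨g, hg, hgne, by simpa [smul_eq_mul] using heq⟩
  simp [ordAt, dif_pos hf, h]

lemma ord_spec {f : ℂ → ℂ} (hf : Differentiable ℂ f) {c : ℂ} (hc : f c ≠ 0) (w : ℂ) :
    ∃ g : ℂ → ℂ, AnalyticAt ℂ g w ∧ g w ≠ 0 ∧
      ∀ᶠ z in nhds w, f z = (z - w) ^ (ordAt f w) * g z := by
  have hA := hf.analyticAt w
  have hne : analyticOrderAt f w ≠ ⊤ := fun h =>
    not_locally_zero hf hc w (analyticOrderAt_eq_top.mp h)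
  obtain ⟨n, hn⟩ : ∃ n : ℕ, analyticOrderAt f w = n := by
    lift analyticOrderAt f w to ℕ using hne with n hn
    exact ⟨n, rfl⟩
  have h1 : ordAt f w = n := by simp [ordAt, dif_pos hA, hn]
  obtain ⟨g, hg, hgne, heq⟩ := hA.analyticOrderAt_eq_natCast.mp hn
  exact ⟨g, hg, hgne, h1 ▸ by simpa [smul_eq_mul] using heq⟩

lemma ordAt_pos_iff {f : ℂ → ℂ} (hf : Differentiable ℂ f) {c : ℂ} (hc : f c ≠ 0) (w : ℂ) :
    f w = 0 ↔ 1 ≤ ordAt f w := by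
  obtain ⟨g, hg, hgne, heq⟩ := ord_spec hf hc w
  have hw := heq.self_of_nhds
  constructor
  · intro h0
    by_contra hlt
    push_neg at hlt
    have h : ordAt f w = 0 := by omega
    rw [h] at hw; simp at hw; rw [hw] at h0; exact hgne h0
  · intro h1
    rw [hw, sub_self, zero_pow (by omega), zero_mul]

lemma entire_mul_linear {f₁ : ℂ → ℂ} (hf₁ : Differentiable ℂ f₁) (w₀ : ℂ) :
    Differentiable ℂ (fun z => (z - w₀) * f₁ z) :=
  (differentiable_id.sub_const w₀).mul hf₁

lemma ordAt_mul_linear_ne {f₁ : ℂ → ℂ} (hf₁ : Differentiable ℂ f₁) {c w₀ w : ℂ}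
    (hc : f₁ c ≠ 0) (hw : w ≠ w₀) :
    ordAt (fun z => (z - w₀) * f₁ z) w = ordAt f₁ w := by
  obtain ⟨g, hg, hgne, heq⟩ := ord_spec hf₁ hc w
  refine ordAt_eq_of (g := fun z => (z - w₀) * g z) ((entire_mul_linear hf₁ w₀).analyticAt w)
    (((analyticAt_id).sub analyticAt_const).mul hg)
    (mul_ne_zero (sub_ne_zero.mpr hw) hgne) ?_
  filter_upwards [heq] with z hz
  rw [hz]; ring

lemma ordAt_mul_linear_self {f₁ : ℂ → ℂ} (hf₁ : Differentiable ℂ f₁) {c w₀ : ℂ}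
    (hc : f₁ c ≠ 0) :
    ordAt (fun z => (z - w₀) * f₁ z) w₀ = ordAt f₁ w₀ + 1 := by
  obtain ⟨g, hg, hgne, heq⟩ := ord_spec hf₁ hc w₀
  refine ordAt_eq_of ((entire_mul_linear hf₁ w₀).analyticAt w₀) hg hgne ?_
  filter_upwards [heq] with z hz
  rw [hz]; ring

lemma zeros_finite {f : ℂ → ℂ} (hf : Differentiable ℂ f) {c : ℂ} (hc : f c ≠ 0)
    (c₀ : ℂ) (r : ℝ) : {w : ℂ | f w = 0 ∧ ‖w - c₀‖ ≤ r}.Finite := by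
  set S := {w : ℂ | f w = 0 ∧ ‖w - c₀‖ ≤ r} with hS
  have hclosed : IsClosed S := by
    have h1 : IsClosed {w : ℂ | f w = 0} := isClosed_eq hf.continuous continuous_const
    have h2 : IsClosed {w : ℂ | ‖w - c₀‖ ≤ r} :=
      isClosed_le (by continuity) continuous_const
    exact h1.inter h2
  have hsub : S ⊆ Metric.closedBall c₀ r := by
    intro w hw
    simpa [Metric.mem_closedBall, Complex.dist_eq] using hw.2
  have hcompact : IsCompact S :=
    (isCompact_closedBall c₀ r).of_isClosed_subset hclosed hsub
  refine hcompact.finite ?_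
  rw [isDiscrete_iff_nhdsNE]
  intro w hw
  rw [Filter.inf_principal_eq_bot]
  have := (hf.analyticAt w).eventually_eq_zero_or_eventually_ne_zero
  rcases this with h | h
  · exact absurd h (not_locally_zero hf hc w)
  · filter_upwards [h] with z hz
    exact fun hzS => hz hzS.1

lemma ordAt_zero_of_ne {f : ℂ → ℂ} (hf : Differentiable ℂ f) {c : ℂ} (hc : f c ≠ 0)
    {w : ℂ} (hw : f w ≠ 0) : ordAt f w = 0 := by
  by_contra h
  exact hw (((ordAt_pos_iff hf hc w).mpr (by omega)))

lemma exists_factor (c c₀ : ℂ) (r : ℝ) :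
    ∀ k : ℕ, ∀ f : ℂ → ℂ, ∀ (hf : Differentiable ℂ f) (hc : f c ≠ 0),
    k ≤ ∑ w ∈ (zeros_finite hf hc c₀ r).toFinset, ordAt f w →
    ∃ (T : Multiset ℂ) (g : ℂ → ℂ), Multiset.card T = k ∧
      (∀ t ∈ T, ‖t - c₀‖ ≤ r) ∧
      Differentiable ℂ g ∧ ∀ z, f z = (T.map (fun t => z - t)).prod * g z := by
  intro k
  induction k with
  | zero =>
    intro f hf hc _
    exact ⟨0, f, rfl, by simp, hf, fun z => by simp⟩
  | succ k ih =>
    intro f hf hc hk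
    set A := (zeros_finite hf hc c₀ r).toFinset with hA
    -- find a zero w₀ with positive order
    have hex : ∃ w₀ ∈ A, ordAt f w₀ ≠ 0 := by
      by_contra h
      push_neg at h
      have : ∑ w ∈ A, ordAt f w = 0 := Finset.sum_eq_zero h
      omega
    obtain ⟨w₀, hw₀A, hw₀ord⟩ := hex
    have hw₀mem := (Set.Finite.mem_toFinset _).mp hw₀A
    have hw₀z : f w₀ = 0 := hw₀mem.1
    have hw₀r : ‖w₀ - c₀‖ ≤ r := hw₀mem.2
    set f₁ := dslope f w₀ with hf₁def
    have hf₁ : Differentiable ℂ f₁ := dslope_entire hf w₀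
    have hfac : ∀ z, f z = (z - w₀) * f₁ z := dslope_factor hw₀z
    have hfe : f = fun z => (z - w₀) * f₁ z := funext hfac
    have hc₁ : f₁ c ≠ 0 := by
      intro h
      apply hc
      rw [hfac c, h, mul_zero]
    set B := (zeros_finite hf₁ hc₁ c₀ r).toFinset with hB
    -- order bookkeeping
    have hordne : ∀ w, w ≠ w₀ → ordAt f w = ordAt f₁ w := by
      intro w hw
      rw [hfe]
      exact ordAt_mul_linear_ne hf₁ hc₁ hw
    have hordself : ordAt f w₀ = ordAt f₁ w₀ + 1 := by
      rw [hfe]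
      exact ordAt_mul_linear_self hf₁ hc₁
    have hBA : B ⊆ A := by
      intro w hw
      rw [Set.Finite.mem_toFinset] at hw ⊢
      exact ⟨by rw [hfac w, hw.1, mul_zero], hw.2⟩
    have hsumA : ∑ w ∈ A, ordAt f w = (∑ w ∈ A, ordAt f₁ w) + 1 := by
      rw [← Finset.sum_erase_add A _ hw₀A, ← Finset.sum_erase_add A (fun w => ordAt f₁ w) hw₀A]
      have : ∑ w ∈ A.erase w₀, ordAt f w = ∑ w ∈ A.erase w₀, ordAt f₁ w := by
        refine Finset.sum_congr rfl fun w hw => ?_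
        exact hordne w (Finset.ne_of_mem_erase hw)
      omega
    have hsumB : ∑ w ∈ A, ordAt f₁ w = ∑ w ∈ B, ordAt f₁ w := by
      refine (Finset.sum_subset hBA ?_).symm
      intro w hwA hwB
      refine ordAt_zero_of_ne hf₁ hc₁ ?_
      intro h
      apply hwB
      rw [Set.Finite.mem_toFinset]
      exact ⟨h, ((Set.Finite.mem_toFinset _).mp hwA).2⟩
    have hk₁ : k ≤ ∑ w ∈ B, ordAt f₁ w := by omega
    obtain ⟨T₁, g, hcard, hmem, hg, hprod⟩ := ih f₁ hf₁ hc₁ hk₁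
    refine ⟨w₀ ::ₘ T₁, g, by simp [hcard], ?_, hg, ?_⟩
    · intro t ht
      rcases Multiset.mem_cons.mp ht with rfl | ht
      · exact hw₀r
      · exact hmem t ht
    · intro z
      rw [hfac z, hprod z, Multiset.map_cons, Multiset.prod_cons, mul_assoc]

lemma multiset_prod_abs (T : Multiset ℂ) (z : ℂ) :
    ‖(T.map (fun t => z - t)).prod‖ = (T.map (fun t => ‖z - t‖)).prod := by
  induction T using Multiset.induction with
  | empty => simp
  | cons a s ih => simp [ih]

lemma prod_lower (z : ℂ) (u : ℝ) (hu : 0 ≤ u) :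
    ∀ T : Multiset ℂ, (∀ t ∈ T, u ≤ ‖z - t‖) →
      u ^ (Multiset.card T) ≤ (T.map (fun t => ‖z - t‖)).prod := by
  intro T
  induction T using Multiset.induction with
  | empty => simp
  | cons a s ih =>
    intro h
    simp only [Multiset.map_cons, Multiset.prod_cons, Multiset.card_cons, pow_succ]
    have h1 := h a (Multiset.mem_cons_self a s)
    have h2 := ih (fun t ht => h t (Multiset.mem_cons_of_mem ht))
    calc u ^ Multiset.card s * u ≤ (s.map (fun t => ‖z - t‖)).prod * ‖z - a‖ := by
          apply mul_le_mul h2 h1 hu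
          exact Multiset.prod_nonneg (by
            intro x hx
            obtain ⟨t, _, rfl⟩ := Multiset.mem_map.mp hx
            exact norm_nonneg _)
      _ = _ := mul_comm _ _

lemma prod_upper (z : ℂ) (u : ℝ) :
    ∀ T : Multiset ℂ, (∀ t ∈ T, ‖z - t‖ ≤ u) →
      (T.map (fun t => ‖z - t‖)).prod ≤ u ^ (Multiset.card T) := by
  intro T
  induction T using Multiset.induction with
  | empty => simp
  | cons a s ih =>
    intro h
    simp only [Multiset.map_cons, Multiset.prod_cons, Multiset.card_cons, pow_succ]
    have h1 := h a (Multiset.mem_cons_self a s)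
    have h2 := ih (fun t ht => h t (Multiset.mem_cons_of_mem ht))
    have hprodnn : (0:ℝ) ≤ (s.map (fun t => ‖z - t‖)).prod :=
      Multiset.prod_nonneg (by
        intro x hx
        obtain ⟨t, _, rfl⟩ := Multiset.mem_map.mp hx
        exact norm_nonneg _)
    calc ‖z - a‖ * (s.map (fun t => ‖z - t‖)).prod
        ≤ u * u ^ Multiset.card s := by
          apply mul_le_mul h1 h2 hprodnn ((norm_nonneg _).trans h1)
      _ = u ^ Multiset.card s * u := mul_comm _ _

lemma max_mod {g : ℂ → ℂ} (hg : Differentiable ℂ g) {c : ℂ} {R M : ℝ} (hR : 0 < R)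
    (h : ∀ z : ℂ, ‖z - c‖ = R → ‖g z‖ ≤ M) :
    ‖g c‖ ≤ M := by
  have := Complex.norm_le_of_forall_mem_frontier_norm_le (U := Metric.ball c R)
    Metric.isBounded_ball hg.diffContOnCl (C := M) ?_ (z := c) ?_
  · simpa using this
  · intro z hz
    rw [frontier_ball c hR.ne'] at hz
    rw [Metric.mem_sphere, Complex.dist_eq] at hz
    simpa using h z hz
  · rw [closure_ball c hR.ne']
    exact Metric.mem_closedBall_self hR.le

lemma count_le {f : ℂ → ℂ} (hf : Differentiable ℂ f) {c : ℂ} {r δ M : ℝ}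
    (hr : 0 < r) (hδ : 0 < δ) (hc : δ ≤ ‖f c‖) (hc' : f c ≠ 0)
    (hM : ∀ z : ℂ, ‖z - c‖ ≤ 3 * r → ‖f z‖ ≤ M) :
    δ * 2 ^ (∑ w ∈ (zeros_finite hf hc' c r).toFinset, ordAt f w) ≤ M := by
  set N := ∑ w ∈ (zeros_finite hf hc' c r).toFinset, ordAt f w with hN
  obtain ⟨T, g, hcard, hmem, hg, hprod⟩ := exists_factor c c r N f hf hc' le_rfl
  have hM0 : 0 < M := lt_of_lt_of_le (lt_of_lt_of_le hδ hc) (hM c (by simp; positivity))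
  -- bound g on the sphere of radius 3r
  have hgs : ∀ z : ℂ, ‖z - c‖ = 3 * r → ‖g z‖ ≤ M / (2 * r) ^ N := by
    intro z hz
    have hlow : (2 * r) ^ N ≤ (T.map (fun t => ‖z - t‖)).prod := by
      rw [← hcard]
      apply prod_lower z (2 * r) (by positivity)
      intro t ht
      have h1 : ‖t - c‖ ≤ r := hmem t ht
      have : ‖z - c‖ ≤ ‖z - t‖ + ‖t - c‖ := by
        simpa using norm_sub_le_norm_sub_add_norm_sub z t c
      rw [hz] at this
      linarith
    have hfz : ‖f z‖ ≤ M := hM z (le_of_eq hz)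
    have heq : ‖f z‖
        = (T.map (fun t => ‖z - t‖)).prod * ‖g z‖ := by
      rw [hprod z, norm_mul, multiset_prod_abs]
    have h2r : (0:ℝ) < (2 * r) ^ N := by positivity
    rw [div_eq_mul_inv, ← hz] at *
    have habsg : ‖g z‖ * (2 * r) ^ N ≤ M := by
      calc ‖g z‖ * (2 * r) ^ N
          ≤ ‖g z‖ * (T.map (fun t => ‖z - t‖)).prod := by
            apply mul_le_mul_of_nonneg_left hlow (norm_nonneg _)
        _ = ‖f z‖ := by rw [heq, mul_comm]
        _ ≤ M := hfz
    calc ‖g z‖ = ‖g z‖ * (2 * r) ^ N * ((2 * r) ^ N)⁻¹ := by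
          field_simp
      _ ≤ M * ((2 * r) ^ N)⁻¹ := by
          apply mul_le_mul_of_nonneg_right habsg (by positivity)
  have hgc : ‖g c‖ ≤ M / (2 * r) ^ N := max_mod hg (by positivity) hgs
  -- center estimate
  have hcent : ‖f c‖ ≤ r ^ N * (M / (2 * r) ^ N) := by
    rw [hprod c, norm_mul, multiset_prod_abs]
    apply mul_le_mul ?_ hgc (norm_nonneg _) (by positivity)
    rw [← hcard]
    apply prod_upper
    intro t ht
    have := hmem t ht
    calc ‖c - t‖ = ‖t - c‖ := by rw [norm_sub_rev]
      _ ≤ r := this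
  have hfinal : δ ≤ M / 2 ^ N := by
    calc δ ≤ ‖f c‖ := hc
      _ ≤ r ^ N * (M / (2 * r) ^ N) := hcent
      _ = M / 2 ^ N := by
          rw [mul_pow]
          field_simp
  calc δ * 2 ^ N ≤ (M / 2 ^ N) * 2 ^ N := by
        apply mul_le_mul_of_nonneg_right hfinal (by positivity)
    _ = M := by field_simp


lemma pl_bound {φ : ℂ → ℂ} {C₀ : ℝ} (hφ : Differentiable ℂ φ)
    (hbd : ∀ t : ℝ, ‖φ t‖ ≤ C₀) (htype : ExpTypeLE φ 1) :
    ∃ C₁ : ℝ, 0 < C₁ ∧ C₀ ≤ C₁ ∧ ∀ z : ℂ, ‖φ z‖ ≤ C₁ * Real.exp (2 * |z.im|) := by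
  obtain ⟨C₂, hC₂⟩ := htype 1 one_pos
  have hC₂' : ∀ z : ℂ, ‖φ z‖ ≤ C₂ * Real.exp (2 * ‖z‖) := by
    intro z; simpa [one_add_one_eq_two] using hC₂ z
  set C₁ : ℝ := max (max C₀ C₂) 1 with hC₁def
  have hC₁pos : (0:ℝ) < C₁ := lt_of_lt_of_le one_pos (le_max_right _ _)
  have hC₀le : C₀ ≤ C₁ := le_trans (le_max_left _ _) (le_max_left _ _)
  have hC₂le : C₂ ≤ C₁ := le_trans (le_max_right C₀ C₂) (le_max_left _ _)
  refine ⟨C₁, hC₁pos, hC₀le, ?_⟩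
  -- the two auxiliary functions
  have key : ∀ (s : ℝ), s = 2 ∨ s = -2 → ∀ z : ℂ,
      (0 ≤ s * z.im) → ‖φ z * Complex.exp (s * I * z)‖ ≤ C₁ → 
      ‖φ z‖ ≤ C₁ * Real.exp (2 * |z.im|) := by
    intro s hs z hsz h
    have habs : ‖Complex.exp (s * I * z)‖ = Real.exp (-(s * z.im)) := by
      have hre : (↑s * I * z).re = -(s * z.im) := by
        simp [Complex.mul_re, Complex.mul_im]
      rw [Complex.norm_exp, hre]
    rw [norm_mul, habs] at h
    have him : |z.im| * 2 = s * z.im ∨ s * z.im = 2 * |z.im| := by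
      rcases hs with rfl | rfl
      · right
        rcases abs_cases z.im with ⟨h1, _⟩ | ⟨h1, _⟩
        · rw [h1]
        · nlinarith [abs_nonneg z.im]
      · right
        rcases abs_cases z.im with ⟨h1, h2⟩ | ⟨h1, _⟩
        · nlinarith [abs_nonneg z.im]
        · rw [h1]; ring
    have him' : s * z.im = 2 * |z.im| := by
      rcases him with h' | h'
      · linarith
      · exact h'
    rw [him'] at h
    have := mul_le_mul_of_nonneg_right h (Real.exp_pos (2 * |z.im|)).le
    rw [mul_assoc, ← Real.exp_add, neg_add_cancel, Real.exp_zero, mul_one] at this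
    exact this
  -- general facts for g_s = φ(z) exp(s I z)
  have habs_exp : ∀ (s : ℝ) (w : ℂ),
      ‖Complex.exp (↑s * I * w)‖ = Real.exp (-(s * w.im)) := by
    intro s w
    have hre : (↑s * I * w).re = -(s * w.im) := by
      simp [Complex.mul_re, Complex.mul_im]
    rw [Complex.norm_exp, hre]
  have hdiff : ∀ s : ℝ, Differentiable ℂ (fun w => φ w * Complex.exp (↑s * I * w)) := by
    intro s
    exact hφ.mul (((differentiable_const _).mul differentiable_id).cexp)
  have hBig : ∀ (s : ℝ), |s| ≤ 2 → ∀ (l : Filter ℂ),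
      (fun w => φ w * Complex.exp (↑s * I * w)) =O[l] fun w => Real.exp (4 * ‖w‖ ^ (1:ℝ)) := by
    intro s hs l
    apply Asymptotics.IsBigO.of_bound C₂
    apply Eventually.of_forall
    intro w
    have h1 : ‖φ w‖ ≤ C₂ * Real.exp (2 * ‖w‖) := hC₂' w
    have h2 : Real.exp (-(s * w.im)) ≤ Real.exp (2 * ‖w‖) := by
      apply Real.exp_le_exp.mpr
      have := Complex.abs_im_le_norm w
      have h3 : |s * w.im| ≤ 2 * ‖w‖ := by
        rw [abs_mul]
        exact mul_le_mul hs this (abs_nonneg _) (by norm_num)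
      have := neg_abs_le (s * w.im)
      linarith [abs_le.mp h3]
    rw [norm_mul, habs_exp s w]
    have hnorm : ‖Real.exp (4 * ‖w‖ ^ (1:ℝ))‖ = Real.exp (4 * ‖w‖) := by
      rw [Real.norm_eq_abs, abs_of_pos (Real.exp_pos _), Real.rpow_one]
    rw [hnorm]
    calc ‖φ w‖ * Real.exp (-(s * w.im))
        ≤ (C₂ * Real.exp (2 * ‖w‖)) * Real.exp (2 * ‖w‖) := by
          apply mul_le_mul h1 h2 (Real.exp_pos _).le
          exact le_trans (norm_nonneg _) h1
      _ = C₂ * Real.exp (4 * ‖w‖) := by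
          rw [mul_assoc, ← Real.exp_add]
          congr 1
          ring
  have hreal_bd : ∀ (s : ℝ) (x : ℝ), ‖φ (x : ℂ) * Complex.exp (↑s * I * (x : ℂ))‖ ≤ C₁ := by
    intro s x
    rw [norm_mul, habs_exp]
    simp only [Complex.ofReal_im, mul_zero, neg_zero, Real.exp_zero, mul_one]
    exact le_trans (hbd x) hC₀le
  have himag_bd : ∀ (s : ℝ), s = 2 ∨ s = -2 → ∀ (x : ℝ), 0 ≤ s * x →
      ‖φ ((x : ℂ) * I) * Complex.exp (↑s * I * ((x : ℂ) * I))‖ ≤ C₁ := by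
    intro s hs x hsx
    rw [norm_mul, habs_exp]
    have him : ((x : ℂ) * I).im = x := by simp
    have habsxI : ‖(x : ℂ) * I‖ = |x| := by
      rw [norm_mul, Complex.norm_I, mul_one, Complex.norm_real, Real.norm_eq_abs]
    rw [him]
    have h1 : ‖φ ((x:ℂ) * I)‖ ≤ C₂ * Real.exp (2 * |x|) := by
      have := hC₂' ((x:ℂ) * I)
      rwa [habsxI] at this
    have h2 : 2 * |x| = s * x := by
      rcases hs with rfl | rfl
      · rcases abs_cases x with ⟨h3, _⟩ | ⟨h3, h4⟩
        · rw [h3]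
        · nlinarith
      · rcases abs_cases x with ⟨h3, h4⟩ | ⟨h3, _⟩
        · nlinarith
        · rw [h3]; ring
    calc ‖φ ((x:ℂ) * I)‖ * Real.exp (-(s * x))
        ≤ (C₂ * Real.exp (2 * |x|)) * Real.exp (-(s * x)) := by
          apply mul_le_mul_of_nonneg_right h1 (Real.exp_pos _).le
      _ = C₂ := by rw [h2, mul_assoc, ← Real.exp_add]; simp
      _ ≤ C₁ := hC₂le
  intro z
  rcases le_or_gt 0 z.im with him | him
  · -- upper half plane, use s = 2
    apply key 2 (Or.inl rfl) z (by positivity)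
    rcases le_or_gt 0 z.re with hre | hre
    · refine PhragmenLindelof.quadrant_I (f := fun w => φ w * Complex.exp (↑(2:ℝ) * I * w)) ((hdiff 2).diffContOnCl) ⟨1, one_lt_two, 4, hBig 2 (by norm_num) _⟩
        (fun x _ => hreal_bd 2 x) (fun x hx => himag_bd 2 (Or.inl rfl) x (by linarith)) hre him
    · refine PhragmenLindelof.quadrant_II (f := fun w => φ w * Complex.exp (↑(2:ℝ) * I * w)) ((hdiff 2).diffContOnCl) ⟨1, one_lt_two, 4, hBig 2 (by norm_num) _⟩
        (fun x _ => hreal_bd 2 x) (fun x hx => himag_bd 2 (Or.inl rfl) x (by linarith)) hre.le him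
  · -- lower half plane, use s = -2
    apply key (-2) (Or.inr rfl) z (by nlinarith)
    rcases le_or_gt 0 z.re with hre | hre
    · refine PhragmenLindelof.quadrant_IV (f := fun w => φ w * Complex.exp (↑(-2:ℝ) * I * w)) ((hdiff (-2)).diffContOnCl) ⟨1, one_lt_two, 4, hBig (-2) (by norm_num) _⟩
        (fun x _ => hreal_bd (-2) x) (fun x hx => himag_bd (-2) (Or.inr rfl) x (by linarith)) hre him.le
    · refine PhragmenLindelof.quadrant_III (f := fun w => φ w * Complex.exp (↑(-2:ℝ) * I * w)) ((hdiff (-2)).diffContOnCl) ⟨1, one_lt_two, 4, hBig (-2) (by norm_num) _⟩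
        (fun x _ => hreal_bd (-2) x) (fun x hx => himag_bd (-2) (Or.inr rfl) x (by linarith)) hre.le him.le

set_option maxHeartbeats 1000000 in
theorem stmt5 (φ : ℂ → ℂ) (C₀ : ℝ) (hφ : Differentiable ℂ φ)
    (hreal : ∀ z : ℂ, φ z = 0 → z.im = 0)
    (hsd : SlowlyDecreasing φ)
    (hbd : ∀ t : ℝ, ‖φ t‖ ≤ C₀)
    (htype : ExpTypeLE φ 1) :
    ∃ C R : ℝ, ∀ x : ℝ, R ≤ |x| → mcount φ x 1 ≤ C * Real.log |x| := by
  obtain ⟨a, ha, hsd'⟩ := hsd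
  obtain ⟨C₁, hC₁pos, hC₀le, hpl⟩ := pl_bound hφ hbd htype
  set K : ℝ := 1 + 6 * (2 * a + 1) + a * (Real.log (1 + 3 * a) + 1) with hK
  refine ⟨K / Real.log 2, max (a + 1) (max (Real.exp 1) C₁), ?_⟩
  intro x hx
  obtain ⟨x', hxx', hlow⟩ := hsd' x
  set X := |x| with hX
  have hXa : a + 1 ≤ X := le_trans (le_max_left _ _) hx
  have hXe : Real.exp 1 ≤ X := le_trans (le_trans (le_max_left _ _) (le_max_right _ _)) hx
  have hXC₁ : C₁ ≤ X := le_trans (le_trans (le_max_right _ _) (le_max_right _ _)) hx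
  have hX1 : 1 < X := by linarith
  have hX0 : 0 < X := by linarith
  set L := Real.log X with hL
  have hL1 : 1 ≤ L := (Real.le_log_iff_exp_le hX0).mpr hXe
  have hL0 : 0 < L := by linarith
  set δ : ℝ := (a + |x'|) ^ (-a : ℝ) with hδ
  have hax' : 0 < a + |x'| := by positivity
  have hδpos : 0 < δ := by rw [hδ]; exact Real.rpow_pos_of_pos hax' _
  have hc' : φ (x' : ℂ) ≠ 0 := by
    intro h
    rw [h] at hlow
    simp only [norm_zero] at hlow
    linarith
  set r : ℝ := |x - x'| + 1 with hr
  have hr0 : 0 < r := by positivity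
  set M : ℝ := C₁ * Real.exp (6 * r) with hM
  have hMbd : ∀ z : ℂ, ‖z - (x' : ℂ)‖ ≤ 3 * r → ‖φ z‖ ≤ M := by
    intro z hz
    have him : |z.im| ≤ 3 * r := by
      have h1 : (z - (x' : ℂ)).im = z.im := by simp
      calc |z.im| = |(z - (x' : ℂ)).im| := by rw [h1]
        _ ≤ ‖z - (x' : ℂ)‖ := Complex.abs_im_le_norm _
        _ ≤ 3 * r := hz
    calc ‖φ z‖ ≤ C₁ * Real.exp (2 * |z.im|) := hpl z
      _ ≤ M := by
          rw [hM]
          apply mul_le_mul_of_nonneg_left _ hC₁pos.le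
          exact Real.exp_le_exp.mpr (by linarith)
  set N := ∑ w ∈ (zeros_finite hφ hc' (x' : ℂ) r).toFinset, ordAt φ w with hN
  have hcount : δ * 2 ^ N ≤ M := by
    have := count_le hφ hr0 hδpos hlow hc' hMbd
    rw [← hN] at this
    exact this
  -- mcount ≤ N
  have hmc : mcount φ x 1 ≤ (N : ℝ) := by
    have hfin1 := zeros_finite hφ hc' (x : ℂ) 1
    have heq : mcount φ x 1 = ∑ w ∈ hfin1.toFinset, (ordAt φ w : ℝ) := by
      unfold mcount
      rw [tsum_subtype {w : ℂ | φ w = 0 ∧ ‖w - (x : ℂ)‖ ≤ 1}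
        (fun w => (ordAt φ w : ℝ))]
      rw [tsum_eq_sum (s := hfin1.toFinset)
        (fun b hb => Set.indicator_of_notMem
          (fun hbS => hb ((Set.Finite.mem_toFinset _).mpr hbS)) _)]
      exact Finset.sum_congr rfl fun w hw =>
        Set.indicator_of_mem ((Set.Finite.mem_toFinset _).mp hw) _
    rw [heq]
    have hsub : hfin1.toFinset ⊆ (zeros_finite hφ hc' (x' : ℂ) r).toFinset := by
      intro w hw
      rw [Set.Finite.mem_toFinset] at hw ⊢
      refine ⟨hw.1, ?_⟩
      have habsxx' : ‖(x : ℂ) - (x' : ℂ)‖ = |x - x'| := by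
        rw [← Complex.ofReal_sub, Complex.norm_real, Real.norm_eq_abs]
      calc ‖w - (x' : ℂ)‖
          ≤ ‖w - (x : ℂ)‖ + ‖(x : ℂ) - (x' : ℂ)‖ := by
            simpa using norm_sub_le_norm_sub_add_norm_sub w (x : ℂ) (x' : ℂ)
        _ ≤ 1 + |x - x'| := by rw [habsxx']; linarith [hw.2]
        _ = r := by rw [hr]; ring
    calc ∑ w ∈ hfin1.toFinset, (ordAt φ w : ℝ)
        ≤ ∑ w ∈ (zeros_finite hφ hc' (x' : ℂ) r).toFinset, (ordAt φ w : ℝ) := by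
          apply Finset.sum_le_sum_of_subset_of_nonneg hsub
          intro i _ _
          positivity
      _ = (N : ℝ) := by rw [hN]; push_cast; ring
  have hlog2 : (0 : ℝ) < Real.log 2 := Real.log_pos one_lt_two
  have hNlog : (N : ℝ) * Real.log 2 ≤ Real.log C₁ + 6 * r + a * Real.log (a + |x'|) := by
    have h1 : Real.log (δ * 2 ^ N) ≤ Real.log M :=
      Real.log_le_log (by positivity) hcount
    rw [Real.log_mul hδpos.ne' (by positivity : (0:ℝ) < 2 ^ N).ne', Real.log_pow] at h1
    rw [hM, Real.log_mul hC₁pos.ne' (Real.exp_pos _).ne', Real.log_exp] at h1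
    have hδlog : Real.log δ = -a * Real.log (a + |x'|) := by
      rw [hδ]; exact Real.log_rpow hax' _
    rw [hδlog] at h1
    linarith
  have hlogaX : Real.log (a + X) ≤ 2 * L := by
    have h1 : a + X ≤ X * X := by nlinarith [sq_nonneg (X - 1)]
    calc Real.log (a + X) ≤ Real.log (X * X) := Real.log_le_log (by positivity) h1
      _ = L + L := by rw [Real.log_mul hX0.ne' hX0.ne', ← hL]
      _ = 2 * L := by ring
  have h2aL : a * Real.log (a + X) ≤ 2 * a * L := by
    have := mul_le_mul_of_nonneg_left hlogaX ha.le
    linarith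
  have hxx2 : |x - x'| ≤ 2 * a * L := le_trans hxx' h2aL
  have hrL : r ≤ (2 * a + 1) * L := by
    rw [hr]; linarith
  have hLX : L ≤ X := Real.log_le_self hX0.le
  have hx'X : |x'| ≤ (1 + 2 * a) * X := by
    have h3 : |x'| ≤ |x| + |x - x'| := by
      have h4 := abs_sub_abs_le_abs_sub x' x
      rw [abs_sub_comm x' x] at h4
      linarith
    rw [← hX] at h3
    have h9 : a * L ≤ a * X := mul_le_mul_of_nonneg_left hLX ha.le
    linarith
  have h6 : (0 : ℝ) ≤ Real.log (1 + 3 * a) := Real.log_nonneg (by linarith)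
  have hlogax' : Real.log (a + |x'|) ≤ (Real.log (1 + 3 * a) + 1) * L := by
    have h4 : a + |x'| ≤ (1 + 3 * a) * X := by
      have h9 : a * 1 ≤ a * X := mul_le_mul_of_nonneg_left hX1.le ha.le
      have h10 : (1 + 3 * a) * X = X + 2 * a * X + a * X := by ring
      have h11 : (1 + 2 * a) * X = X + 2 * a * X := by ring
      rw [h10]
      rw [h11] at hx'X
      linarith
    have h5 : Real.log (a + |x'|) ≤ Real.log ((1 + 3 * a) * X) := Real.log_le_log hax' h4
    rw [Real.log_mul (by positivity) hX0.ne', ← hL] at h5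
    have h12 : Real.log (1 + 3 * a) * 1 ≤ Real.log (1 + 3 * a) * L :=
      mul_le_mul_of_nonneg_left hL1 h6
    have h13 : (Real.log (1 + 3 * a) + 1) * L = Real.log (1 + 3 * a) * L + L := by ring
    rw [h13]
    linarith
  have hlogC₁ : Real.log C₁ ≤ L := by
    rw [hL]
    exact Real.log_le_log hC₁pos hXC₁
  have hfinal : (N : ℝ) * Real.log 2 ≤ K * L := by
    have h7 := mul_le_mul_of_nonneg_left hlogax' ha.le
    have h8 : 6 * r ≤ 6 * ((2 * a + 1) * L) := by linarith
    calc (N : ℝ) * Real.log 2 ≤ Real.log C₁ + 6 * r + a * Real.log (a + |x'|) := hNlog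
      _ ≤ L + 6 * ((2 * a + 1) * L) + a * ((Real.log (1 + 3 * a) + 1) * L) := by linarith
      _ = K * L := by rw [hK]; ring
  calc mcount φ x 1 ≤ (N : ℝ) := hmc
    _ ≤ K * L / Real.log 2 := by
        rw [le_div_iff₀ hlog2]
        exact hfinal
    _ = K / Real.log 2 * L := by ring
end

section
/- Let Λ = Λ⁺ ∪ (−Λ⁺), where Λ⁺ = {λ_j} is a positive sequence of density Δ. Fix A > 0. Then ∫_{|x| ln|x|}^{∞} (n(x,t) − n(x + iA ln|x|, t))/t dt = O(A²) as |x| → ∞, where n(z,t) counts points ±λ_j in the closed disc of radius t centered at z. -/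
open Complex Filter MeasureTheory
open scoped ENNReal

lemma auxPoint (T H d : ℝ) (hT : 0 < T) (hd : 0 ≤ d) :
    ∫⁻ t in Set.Ioi T,
      (Set.Ico d (Real.sqrt (d ^ 2 + H ^ 2))).indicator (fun s => ENNReal.ofReal s⁻¹) t ≤
    ENNReal.ofReal (H ^ 2 / (2 * (max T d) ^ 2)) := by
  set e := Real.sqrt (d ^ 2 + H ^ 2) with he
  set m := max T d with hm
  have hm0 : 0 < m := lt_of_lt_of_le hT (le_max_left _ _)
  have hdm : d ≤ m := le_max_right _ _
  rw [lintegral_indicator measurableSet_Ico _, Measure.restrict_restrict measurableSet_Ico]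
  calc ∫⁻ t in Set.Ico d e ∩ Set.Ioi T, ENNReal.ofReal t⁻¹
      ≤ ∫⁻ _t in Set.Ico d e ∩ Set.Ioi T, ENNReal.ofReal m⁻¹ := by
        refine setLIntegral_mono measurable_const fun t ht => ?_
        refine ENNReal.ofReal_le_ofReal (inv_anti₀ hm0 ?_)
        exact max_le (le_of_lt ht.2) ht.1.1
    _ = ENNReal.ofReal m⁻¹ * volume (Set.Ico d e ∩ Set.Ioi T) := setLIntegral_const _ _
    _ ≤ ENNReal.ofReal m⁻¹ * volume (Set.Ico m e) := by
        refine mul_le_mul_right (measure_mono fun t ht => ?_) _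
        exact ⟨max_le (le_of_lt ht.2) ht.1.1, ht.1.2⟩
    _ = ENNReal.ofReal m⁻¹ * ENNReal.ofReal (e - m) := by rw [Real.volume_Ico]
    _ = ENNReal.ofReal (m⁻¹ * (e - m)) := (ENNReal.ofReal_mul (by positivity)).symm
    _ ≤ ENNReal.ofReal (H ^ 2 / (2 * m ^ 2)) := by
        refine ENNReal.ofReal_le_ofReal ?_
        have hsq : e ^ 2 = d ^ 2 + H ^ 2 := Real.sq_sqrt (by positivity)
        have key : (e - m) * (2 * m) ≤ H ^ 2 := by nlinarith [sq_nonneg (e - m), hd, hdm, hm0]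
        have h2 : m * (H ^ 2 / (2 * m ^ 2)) = H ^ 2 / (2 * m) := by field_simp
        rw [inv_mul_le_iff₀ hm0, h2, le_div_iff₀ (by positivity)]
        exact key

lemma auxTsumIte (D : Set ℕ) (hD : D.Finite) (c : ℝ≥0∞) :
    ∑' j, D.indicator (fun _ => c) j = D.ncard * c := by
  have h1 : ∀ j ∉ hD.toFinset, D.indicator (fun _ => c) j = 0 := by
    intro j hj; rw [Set.Finite.mem_toFinset] at hj; exact Set.indicator_of_notMem hj _
  rw [tsum_eq_sum h1]
  have h2 : ∀ j ∈ hD.toFinset, D.indicator (fun _ => c) j = c := by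
    intro j hj; rw [Set.Finite.mem_toFinset] at hj; exact Set.indicator_of_mem hj _
  rw [Finset.sum_congr rfl h2, Finset.sum_const, Set.ncard_eq_toFinset_card _ hD,
    nsmul_eq_mul]

lemma auxFinite {lam : ℕ → ℝ} (htop : Tendsto lam atTop atTop) (M : ℝ) :
    {j | lam j ≤ M}.Finite := by
  obtain ⟨n, hn⟩ := (htop.eventually (eventually_gt_atTop M)).exists_forall_of_atTop
  refine (Set.finite_Iio n).subset fun j hj => ?_
  simp only [Set.mem_setOf_eq] at hj
  by_contra h
  exact absurd hj (not_le.mpr (hn j (le_of_not_gt h)))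

lemma auxTendsto (a b : ℝ) :
    Tendsto (fun y : ℝ => a * ((Real.log y) ^ 2 * (y ^ 2)⁻¹) +
      b * ((Real.log y) ^ 2 * (Real.sqrt y)⁻¹)) atTop (nhds 0) := by
  have h1 : Tendsto (fun y : ℝ => (Real.log y) ^ 2 / y ^ 2) atTop (nhds 0) := by
    have h := (Real.isLittleO_log_id_atTop).pow (n := 2) (by norm_num)
    exact h.tendsto_div_nhds_zero
  have h2 : Tendsto (fun y : ℝ => (Real.log y) ^ 2 / Real.sqrt y) atTop (nhds 0) := by
    have h := (isLittleO_log_rpow_atTop (r := 1/4) (by norm_num)).pow (n := 2)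
      (by norm_num)
    have heq : (fun y : ℝ => (y ^ (1/4 : ℝ)) ^ 2) =ᶠ[atTop] fun y => Real.sqrt y := by
      filter_upwards [eventually_ge_atTop (0 : ℝ)] with y hy
      rw [Real.sqrt_eq_rpow, ← Real.rpow_natCast (y ^ (1/4 : ℝ)) 2, ← Real.rpow_mul hy]
      norm_num
    exact (h.congr' EventuallyEq.rfl heq).tendsto_div_nhds_zero
  have := ((h1.const_mul a).add (h2.const_mul b))
  simp only [mul_zero, add_zero] at this
  refine this.congr fun y => ?_
  rw [div_eq_mul_inv, div_eq_mul_inv]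

/-- Number of points `±λ_j` in the closed disc of radius `t` centered at `z`. -/
noncomputable def nDisc (lam : ℕ → ℝ) (z : ℂ) (t : ℝ) : ℝ :=
  (({j : ℕ | ‖(lam j : ℂ) - z‖ ≤ t}.ncard : ℝ) +
    ({j : ℕ | ‖(-lam j : ℂ) - z‖ ≤ t}.ncard : ℝ))

set_option maxHeartbeats 2000000 in
theorem stmt11 (lam : ℕ → ℝ) (Δ : ℝ)
    (hpos : ∀ j, 0 < lam j) (hmono : Monotone lam)
    (htop : Tendsto lam atTop atTop)
    (hdens : Tendsto (fun j : ℕ => (j : ℝ) / lam j) atTop (nhds Δ)) :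
    ∃ C : ℝ, ∀ A > (0 : ℝ), ∃ R : ℝ, ∀ x : ℝ, R ≤ |x| →
      |∫ t in Set.Ioi (|x| * Real.log |x|),
          (nDisc lam (x : ℂ) t -
            nDisc lam ((x : ℂ) + (A : ℂ) * (Real.log |x| : ℂ) * Complex.I) t) / t| ≤
        C * A ^ 2 := by
  refine ⟨1, fun A hA => ?_⟩
  have hΔ : 0 ≤ Δ :=
    ge_of_tendsto hdens (Eventually.of_forall fun j =>
      div_nonneg (Nat.cast_nonneg j) (hpos j).le)
  set B : ℝ := Δ + 1 with hBdef
  have hB1 : 1 ≤ B := by linarith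
  have hB0 : 0 < B := by linarith
  obtain ⟨J, hJ⟩ : ∃ J : ℕ, ∀ j, J ≤ j → (j : ℝ) ≤ B * lam j := by
    have h := hdens.eventually (gt_mem_nhds (show Δ < B by linarith))
    rw [eventually_atTop] at h
    obtain ⟨J, hJ⟩ := h
    refine ⟨J, fun j hj => ?_⟩
    have h2 := (hJ j hj).le
    rw [div_le_iff₀ (hpos j)] at h2
    linarith
  set J' : ℕ := max J 1 with hJ'def
  have hsum : Summable (fun j : ℕ => ((j : ℝ) ^ (3/2 : ℝ))⁻¹) := by
    simpa [one_div] using Real.summable_one_div_nat_rpow.mpr (show (1:ℝ) < 3/2 by norm_num)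
  set c₀ : ℝ := ∑' j : ℕ, ((j : ℝ) ^ (3/2 : ℝ))⁻¹ with hc₀def
  have hc₀ : 0 ≤ c₀ := tsum_nonneg fun j => by positivity
  obtain ⟨R₀, hR₀⟩ := eventually_atTop.mp
    ((auxTendsto (J' : ℝ) (9 * B ^ (3/2 : ℝ) * c₀)).eventually (Iio_mem_nhds one_pos))
  refine ⟨max R₀ (Real.exp 1), fun x hx => ?_⟩
  -- basic quantities
  set y : ℝ := |x| with hydef
  have hyE : Real.exp 1 ≤ y := le_trans (le_max_right _ _) hx
  have hyR : R₀ ≤ y := le_trans (le_max_left _ _) hx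
  have hy0 : 0 < y := lt_of_lt_of_le (Real.exp_pos 1) hyE
  set L : ℝ := Real.log y with hLdef
  have hL1 : 1 ≤ L := (Real.le_log_iff_exp_le hy0).mpr hyE
  set T : ℝ := y * L with hTdef
  have hTy : y ≤ T := le_mul_of_one_le_right hy0.le hL1
  have hT0 : 0 < T := lt_of_lt_of_le hy0 hTy
  set H : ℝ := A * L with hHdef
  set z : ℂ := (x : ℂ) + (A : ℂ) * (L : ℂ) * Complex.I with hzdef
  set d : ℕ → ℝ := fun j => |lam j - x| with hddef
  set d' : ℕ → ℝ := fun j => |lam j + x| with hd'def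
  set e : ℕ → ℝ := fun j => Real.sqrt (d j ^ 2 + H ^ 2) with hedef
  set e' : ℕ → ℝ := fun j => Real.sqrt (d' j ^ 2 + H ^ 2) with he'def
  set G : ℕ → ℝ → ℝ≥0∞ :=
    fun j => (Set.Ico (d j) (e j)).indicator (fun s => ENNReal.ofReal s⁻¹) with hGdef
  set G' : ℕ → ℝ → ℝ≥0∞ :=
    fun j => (Set.Ico (d' j) (e' j)).indicator (fun s => ENNReal.ofReal s⁻¹) with hG'def
  set μf : ℕ → ℝ := fun j => max T (lam j - T) with hμdef
  have hμT : ∀ j, T ≤ μf j := fun j => le_max_left _ _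
  have hμ0 : ∀ j, 0 < μf j := fun j => lt_of_lt_of_le hT0 (hμT j)
  -- abs computations
  have habs1 : ∀ j, ‖(lam j : ℂ) - (x : ℂ)‖ = d j := by
    intro j
    rw [show ((lam j : ℂ) - (x : ℂ)) = ((lam j - x : ℝ) : ℂ) by push_cast; ring,
      Complex.norm_real, Real.norm_eq_abs]
  have habs2 : ∀ j, ‖(-(lam j) : ℂ) - (x : ℂ)‖ = d' j := by
    intro j
    rw [show ((-(lam j) : ℂ) - (x : ℂ)) = ((-(lam j + x) : ℝ) : ℂ) by push_cast; ring,
      Complex.norm_real, Real.norm_eq_abs, _root_.abs_neg]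
  have habs3 : ∀ j, ‖(lam j : ℂ) - z‖ = e j := by
    intro j
    rw [show ((lam j : ℂ) - z) = ((lam j - x : ℝ) : ℂ) + ((-(A*L) : ℝ) : ℂ) * Complex.I by
      rw [hzdef]; push_cast; ring, Complex.norm_add_mul_I]
    show Real.sqrt _ = Real.sqrt (d j ^ 2 + H ^ 2)
    congr 1
    simp only [hddef, hHdef]
    rw [_root_.sq_abs]
    ring
  have habs4 : ∀ j, ‖(-(lam j) : ℂ) - z‖ = e' j := by
    intro j
    rw [show ((-(lam j) : ℂ) - z) = ((-(lam j + x) : ℝ) : ℂ) + ((-(A*L) : ℝ) : ℂ) * Complex.I by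
      rw [hzdef]; push_cast; ring, Complex.norm_add_mul_I]
    show Real.sqrt _ = Real.sqrt (d' j ^ 2 + H ^ 2)
    congr 1
    simp only [hd'def, hHdef]
    rw [_root_.sq_abs]
    ring
  -- finiteness
  have hfin : ∀ t : ℝ, {j | d j ≤ t}.Finite := by
    intro t
    refine (auxFinite htop (t + y)).subset fun j hj => ?_
    simp only [Set.mem_setOf_eq] at hj ⊢
    have h1 : lam j - x ≤ d j := le_abs_self _
    have h2 : x ≤ y := le_abs_self x
    linarith
  have hfin' : ∀ t : ℝ, {j | d' j ≤ t}.Finite := by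
    intro t
    refine (auxFinite htop (t + y)).subset fun j hj => ?_
    simp only [Set.mem_setOf_eq] at hj ⊢
    have h1 : lam j + x ≤ d' j := le_abs_self _
    have h2 : -x ≤ y := neg_le_abs x
    linarith
  -- d dominates μ
  have hμd : ∀ j, μf j ≤ max T (d j) := by
    intro j
    refine max_le_max le_rfl ?_
    have h1 : lam j - x ≤ d j := le_abs_self _
    have h2 : x ≤ y := le_abs_self x
    linarith
  have hμd' : ∀ j, μf j ≤ max T (d' j) := by
    intro j
    refine max_le_max le_rfl ?_
    have h1 : lam j + x ≤ d' j := le_abs_self _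
    have h2 : -x ≤ y := neg_le_abs x
    linarith
  -- subset
  have hde : ∀ j, d j ≤ e j := by
    intro j
    have hd0 : 0 ≤ d j := by simp only [hddef]; positivity
    calc d j = Real.sqrt (d j ^ 2) := (Real.sqrt_sq hd0).symm
      _ ≤ e j := Real.sqrt_le_sqrt (by nlinarith [sq_nonneg H])
  have hde' : ∀ j, d' j ≤ e' j := by
    intro j
    have hd0 : 0 ≤ d' j := by simp only [hd'def]; positivity
    calc d' j = Real.sqrt (d' j ^ 2) := (Real.sqrt_sq hd0).symm
      _ ≤ e' j := Real.sqrt_le_sqrt (by nlinarith [sq_nonneg H])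
  -- pointwise bound
  have hpt : ∀ t ∈ Set.Ioi T,
      ENNReal.ofReal ‖(nDisc lam (x : ℂ) t - nDisc lam z t) / t‖ ≤
        ∑' j, (G j t + G' j t) := by
    intro t ht
    rw [Set.mem_Ioi] at ht
    have ht0 : 0 < t := lt_trans hT0 ht
    have hD1 : {j | e j ≤ t} ⊆ {j | d j ≤ t} := fun j hj => le_trans (hde j) hj
    have hD1' : {j | e' j ≤ t} ⊆ {j | d' j ≤ t} := fun j hj => le_trans (hde' j) hj
    have hf1 : {j | d j ≤ t}.Finite := hfin t
    have hf1' : {j | d' j ≤ t}.Finite := hfin' t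
    set D : Set ℕ := {j | d j ≤ t} \ {j | e j ≤ t} with hDdef
    set D' : Set ℕ := {j | d' j ≤ t} \ {j | e' j ≤ t} with hD'def
    have hfD : D.Finite := hf1.diff
    have hfD' : D'.Finite := hf1'.diff
    simp only [nDisc, habs1, habs2, habs3, habs4]
    have hcast : (({j | d j ≤ t}.ncard : ℝ) + ({j | d' j ≤ t}.ncard : ℝ)) -
        (({j | e j ≤ t}.ncard : ℝ) + ({j | e' j ≤ t}.ncard : ℝ)) =
        (D.ncard : ℝ) + (D'.ncard : ℝ) := by
      rw [hDdef, hD'def, Set.cast_ncard_sdiff hD1 hf1, Set.cast_ncard_sdiff hD1' hf1']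
      ring
    rw [hcast, Real.norm_of_nonneg (by positivity), div_eq_mul_inv,
      ENNReal.ofReal_mul (by positivity),
      ENNReal.ofReal_add (by positivity) (by positivity),
      ENNReal.ofReal_natCast, ENNReal.ofReal_natCast, add_mul,
      (auxTsumIte D hfD (ENNReal.ofReal t⁻¹)).symm,
      (auxTsumIte D' hfD' (ENNReal.ofReal t⁻¹)).symm, ← ENNReal.tsum_add]
    refine ENNReal.tsum_le_tsum fun j => ?_
    have hG1 : D.indicator (fun _ => ENNReal.ofReal t⁻¹) j = G j t := by
      simp only [hGdef]
      by_cases hj : j ∈ D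
      · rw [Set.indicator_of_mem hj, Set.indicator_of_mem]
        obtain ⟨h1, h2⟩ := hj
        simp only [Set.mem_setOf_eq] at h1 h2
        exact Set.mem_Ico.mpr ⟨h1, not_le.mp h2⟩
      · rw [Set.indicator_of_notMem hj, Set.indicator_of_notMem]
        intro hC
        rw [Set.mem_Ico] at hC
        exact hj ⟨hC.1, fun hc => absurd hC.2 (not_lt.mpr hc)⟩
    have hG2 : D'.indicator (fun _ => ENNReal.ofReal t⁻¹) j = G' j t := by
      simp only [hG'def]
      by_cases hj : j ∈ D'
      · rw [Set.indicator_of_mem hj, Set.indicator_of_mem]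
        obtain ⟨h1, h2⟩ := hj
        simp only [Set.mem_setOf_eq] at h1 h2
        exact Set.mem_Ico.mpr ⟨h1, not_le.mp h2⟩
      · rw [Set.indicator_of_notMem hj, Set.indicator_of_notMem]
        intro hC
        rw [Set.mem_Ico] at hC
        exact hj ⟨hC.1, fun hc => absurd hC.2 (not_lt.mpr hc)⟩
    rw [hG1, hG2]
  -- lintegral bound
  have hint : ∫⁻ t in Set.Ioi T,
      ENNReal.ofReal ‖(nDisc lam (x : ℂ) t - nDisc lam z t) / t‖ ≤
      ENNReal.ofReal (A ^ 2) := by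
    have hmeasG : ∀ j, Measurable (G j) := fun j =>
      Measurable.indicator (ENNReal.measurable_ofReal.comp measurable_inv) measurableSet_Ico
    have hmeasG' : ∀ j, Measurable (G' j) := fun j =>
      Measurable.indicator (ENNReal.measurable_ofReal.comp measurable_inv) measurableSet_Ico
    -- per-point bound
    have hper : ∀ j, (∫⁻ t in Set.Ioi T, (G j t + G' j t)) ≤
        ENNReal.ofReal (H ^ 2 * ((μf j) ^ 2)⁻¹) := by
      intro j
      rw [lintegral_add_left (hmeasG j)]
      refine le_trans (add_le_add (auxPoint T H (d j) hT0 (by simp only [hddef]; positivity))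
        (auxPoint T H (d' j) hT0 (by simp only [hd'def]; positivity))) ?_
      rw [← ENNReal.ofReal_add (by positivity) (by positivity)]
      refine ENNReal.ofReal_le_ofReal ?_
      have h2 := hμd j
      have h2' := hμd' j
      have h3 := hμ0 j
      have h1 : H ^ 2 / (2 * (max T (d j)) ^ 2) ≤ H ^ 2 / (2 * (μf j) ^ 2) := by
        apply div_le_div_of_nonneg_left (by positivity) (by positivity)
        nlinarith
      have h1' : H ^ 2 / (2 * (max T (d' j)) ^ 2) ≤ H ^ 2 / (2 * (μf j) ^ 2) := by
        apply div_le_div_of_nonneg_left (by positivity) (by positivity)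
        nlinarith
      have h4 : H ^ 2 / (2 * (μf j) ^ 2) + H ^ 2 / (2 * (μf j) ^ 2) =
          H ^ 2 * ((μf j) ^ 2)⁻¹ := by
        field_simp
        ring
      linarith
    -- sum bound
    have hsumbound : ∑' j, ENNReal.ofReal (((μf j) ^ 2)⁻¹) ≤
        ENNReal.ofReal ((J' : ℝ) * (T ^ 2)⁻¹ + (9 * B ^ (3/2 : ℝ) * c₀) * (Real.sqrt T)⁻¹) := by
      set w1 : ℕ → ℝ≥0∞ :=
        fun j => (Set.Iio J').indicator (fun _ => ENNReal.ofReal ((T ^ 2)⁻¹)) j with hw1def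
      set w2 : ℕ → ℝ≥0∞ := fun j =>
        ENNReal.ofReal ((9 * B ^ (3/2 : ℝ)) * (Real.sqrt T)⁻¹ * (((j : ℝ) ^ (3/2 : ℝ))⁻¹))
        with hw2def
      have hpoint : ∀ j, ENNReal.ofReal (((μf j) ^ 2)⁻¹) ≤ w1 j + w2 j := by
        intro j
        by_cases hj : j < J'
        · refine le_trans ?_ le_self_add
          simp only [hw1def]
          rw [Set.indicator_of_mem (show j ∈ Set.Iio J' from hj)]
          refine ENNReal.ofReal_le_ofReal ?_
          have hμ := hμT j
          exact inv_anti₀ (by positivity) (by nlinarith)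
        · push_neg at hj
          refine le_trans ?_ le_add_self
          have hj1 : 1 ≤ j := le_trans (le_max_right J 1) hj
          have hjJ : J ≤ j := le_trans (le_max_left J 1) hj
          have hlam := hJ j hjJ
          have hjB : (j : ℝ) / B ≤ lam j := by
            rw [div_le_iff₀ hB0]; linarith
          set Mj := max T ((j : ℝ) / B) with hMjdef
          have hMT : T ≤ Mj := le_max_left _ _
          have hMa : (j : ℝ) / B ≤ Mj := le_max_right _ _
          have hM0 : 0 < Mj := lt_of_lt_of_le hT0 hMT
          have hμj := hμ0 j
          have h3μ : Mj ≤ 3 * μf j := by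
            rcases le_or_gt ((j : ℝ) / B) (2 * T) with h | h
            · have h5 : Mj ≤ 2 * T := max_le (by linarith) h
              have h6 := hμT j
              linarith
            · have hMj2 : Mj = (j : ℝ) / B := max_eq_right (by linarith)
              have hμl : (j : ℝ) / B - T ≤ μf j :=
                le_trans (by linarith) (le_max_right T (lam j - T))
              rw [hMj2]; linarith
          have hM2 : Real.sqrt T * ((j : ℝ) / B) ^ (3/2 : ℝ) ≤ Mj ^ 2 := by
            have h1 : Real.sqrt T ≤ Mj ^ ((1 : ℝ)/2) := by
              rw [Real.sqrt_eq_rpow]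
              exact Real.rpow_le_rpow hT0.le hMT (by norm_num)
            have h2 : ((j : ℝ) / B) ^ (3/2 : ℝ) ≤ Mj ^ (3/2 : ℝ) :=
              Real.rpow_le_rpow (by positivity) hMa (by norm_num)
            calc Real.sqrt T * ((j : ℝ) / B) ^ (3/2 : ℝ)
                ≤ Mj ^ ((1 : ℝ)/2) * Mj ^ (3/2 : ℝ) :=
                  mul_le_mul h1 h2 (by positivity) (by positivity)
              _ = Mj ^ 2 := by
                  rw [← Real.rpow_add hM0,
                    show ((1 : ℝ)/2 + 3/2) = ((2 : ℕ) : ℝ) by norm_num,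
                    Real.rpow_natCast]
          have hstep1 : ((μf j) ^ 2)⁻¹ ≤ 9 * (Mj ^ 2)⁻¹ := by
            rw [show (9 : ℝ) * (Mj ^ 2)⁻¹ = ((Mj ^ 2) / 9)⁻¹ by field_simp]
            exact inv_anti₀ (by positivity) (by nlinarith)
          have hj0 : (0 : ℝ) < (j : ℝ) := by exact_mod_cast hj1
          have hstep2 : (Mj ^ 2)⁻¹ ≤ (Real.sqrt T)⁻¹ * (((j : ℝ) / B) ^ (3/2 : ℝ))⁻¹ := by
            rw [← mul_inv]
            exact inv_anti₀ (by positivity) hM2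
          have hdivr : (((j : ℝ) / B) ^ (3/2 : ℝ))⁻¹ = B ^ (3/2 : ℝ) * (((j : ℝ)) ^ (3/2 : ℝ))⁻¹ := by
            rw [Real.div_rpow (by positivity) hB0.le, inv_div, div_eq_mul_inv]
          rw [hw2def]
          refine ENNReal.ofReal_le_ofReal ?_
          calc ((μf j) ^ 2)⁻¹ ≤ 9 * (Mj ^ 2)⁻¹ := hstep1
            _ ≤ 9 * ((Real.sqrt T)⁻¹ * (((j : ℝ) / B) ^ (3/2 : ℝ))⁻¹) :=
                mul_le_mul_of_nonneg_left hstep2 (by norm_num)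
            _ = (9 * B ^ (3/2 : ℝ)) * (Real.sqrt T)⁻¹ * (((j : ℝ)) ^ (3/2 : ℝ))⁻¹ := by
                rw [hdivr]; ring
      calc ∑' j, ENNReal.ofReal (((μf j) ^ 2)⁻¹) ≤ ∑' j, (w1 j + w2 j) :=
            ENNReal.tsum_le_tsum hpoint
        _ = (∑' j, w1 j) + ∑' j, w2 j := ENNReal.tsum_add
        _ ≤ ENNReal.ofReal ((J' : ℝ) * (T ^ 2)⁻¹ +
              (9 * B ^ (3/2 : ℝ) * c₀) * (Real.sqrt T)⁻¹) := by
            have hw1 : ∑' j, w1 j = (J' : ℝ≥0∞) * ENNReal.ofReal ((T ^ 2)⁻¹) := by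
              rw [hw1def, auxTsumIte _ (Set.finite_Iio J')]
              congr 1
              rw [show (Set.Iio J') = ((Finset.range J' : Finset ℕ) : Set ℕ) by
                rw [Finset.coe_range], Set.ncard_coe_finset, Finset.card_range]
            have hw2 : ∑' j, w2 j = ENNReal.ofReal ((9 * B ^ (3/2 : ℝ)) * (Real.sqrt T)⁻¹) *
                ENNReal.ofReal c₀ := by
              rw [hw2def]
              calc ∑' (j : ℕ), ENNReal.ofReal ((9 * B ^ (3/2 : ℝ)) * (Real.sqrt T)⁻¹ *
                      (((j : ℝ)) ^ (3/2 : ℝ))⁻¹)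
                  = ∑' (j : ℕ), ENNReal.ofReal ((9 * B ^ (3/2 : ℝ)) * (Real.sqrt T)⁻¹) *
                      ENNReal.ofReal ((((j : ℝ)) ^ (3/2 : ℝ))⁻¹) :=
                    tsum_congr fun j => ENNReal.ofReal_mul (by positivity)
                _ = ENNReal.ofReal ((9 * B ^ (3/2 : ℝ)) * (Real.sqrt T)⁻¹) *
                      ∑' (j : ℕ), ENNReal.ofReal ((((j : ℝ)) ^ (3/2 : ℝ))⁻¹) := ENNReal.tsum_mul_left
                _ = ENNReal.ofReal ((9 * B ^ (3/2 : ℝ)) * (Real.sqrt T)⁻¹) *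
                      ENNReal.ofReal c₀ := by
                    rw [hc₀def, ENNReal.ofReal_tsum_of_nonneg (fun j => by positivity) hsum]
            rw [hw1, hw2, ← ENNReal.ofReal_natCast J',
              ← ENNReal.ofReal_mul (by positivity), ← ENNReal.ofReal_mul (by positivity),
              ← ENNReal.ofReal_add (by positivity) (by positivity)]
            refine ENNReal.ofReal_le_ofReal (le_of_eq ?_)
            ring
    calc ∫⁻ t in Set.Ioi T, ENNReal.ofReal ‖(nDisc lam (x : ℂ) t - nDisc lam z t) / t‖
        ≤ ∫⁻ t in Set.Ioi T, ∑' j, (G j t + G' j t) :=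
          lintegral_mono_ae (ae_restrict_of_forall_mem measurableSet_Ioi hpt)
      _ = ∑' j, ∫⁻ t in Set.Ioi T, (G j t + G' j t) :=
          lintegral_tsum fun j => ((hmeasG j).add (hmeasG' j)).aemeasurable
      _ ≤ ∑' j, ENNReal.ofReal (H ^ 2 * ((μf j) ^ 2)⁻¹) := ENNReal.tsum_le_tsum hper
      _ = ENNReal.ofReal (H ^ 2) * ∑' j, ENNReal.ofReal (((μf j) ^ 2)⁻¹) := by
          rw [← ENNReal.tsum_mul_left]
          exact tsum_congr fun j => ENNReal.ofReal_mul (by positivity)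
      _ ≤ ENNReal.ofReal (H ^ 2) *
          ENNReal.ofReal ((J' : ℝ) * (T ^ 2)⁻¹ + (9 * B ^ (3/2 : ℝ) * c₀) * (Real.sqrt T)⁻¹) :=
          mul_le_mul_right hsumbound _
      _ = ENNReal.ofReal (H ^ 2 *
          ((J' : ℝ) * (T ^ 2)⁻¹ + (9 * B ^ (3/2 : ℝ) * c₀) * (Real.sqrt T)⁻¹)) :=
          (ENNReal.ofReal_mul (by positivity)).symm
      _ ≤ ENNReal.ofReal (A ^ 2) := by
          refine ENNReal.ofReal_le_ofReal ?_
          have hT2 : (T ^ 2)⁻¹ ≤ (y ^ 2)⁻¹ := inv_anti₀ (by positivity) (by nlinarith)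
          have hTs : (Real.sqrt T)⁻¹ ≤ (Real.sqrt y)⁻¹ :=
            inv_anti₀ (Real.sqrt_pos.mpr hy0) (Real.sqrt_le_sqrt hTy)
          have hφ := (hR₀ y hyR).le
          have hc9 : (0 : ℝ) ≤ 9 * B ^ (3/2 : ℝ) * c₀ := by positivity
          have hL2 : (0 : ℝ) ≤ L ^ 2 := sq_nonneg L
          have key : L ^ 2 * ((J' : ℝ) * (T ^ 2)⁻¹ +
              (9 * B ^ (3/2 : ℝ) * c₀) * (Real.sqrt T)⁻¹) ≤ 1 := by
            have e1 : (J' : ℝ) * (L ^ 2 * (T ^ 2)⁻¹) ≤ (J' : ℝ) * (L ^ 2 * (y ^ 2)⁻¹) :=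
              mul_le_mul_of_nonneg_left (mul_le_mul_of_nonneg_left hT2 hL2) (Nat.cast_nonneg J')
            have e2 : (9 * B ^ (3/2 : ℝ) * c₀) * (L ^ 2 * (Real.sqrt T)⁻¹) ≤
                (9 * B ^ (3/2 : ℝ) * c₀) * (L ^ 2 * (Real.sqrt y)⁻¹) :=
              mul_le_mul_of_nonneg_left (mul_le_mul_of_nonneg_left hTs hL2) hc9
            have e3 : L ^ 2 * ((J' : ℝ) * (T ^ 2)⁻¹ +
                (9 * B ^ (3/2 : ℝ) * c₀) * (Real.sqrt T)⁻¹) =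
                (J' : ℝ) * (L ^ 2 * (T ^ 2)⁻¹) +
                (9 * B ^ (3/2 : ℝ) * c₀) * (L ^ 2 * (Real.sqrt T)⁻¹) := by ring
            rw [e3]
            calc (J' : ℝ) * (L ^ 2 * (T ^ 2)⁻¹) +
                (9 * B ^ (3/2 : ℝ) * c₀) * (L ^ 2 * (Real.sqrt T)⁻¹)
                ≤ (J' : ℝ) * (L ^ 2 * (y ^ 2)⁻¹) +
                  (9 * B ^ (3/2 : ℝ) * c₀) * (L ^ 2 * (Real.sqrt y)⁻¹) := add_le_add e1 e2
              _ ≤ 1 := hφ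
          have hHL : H ^ 2 = A ^ 2 * L ^ 2 := by rw [hHdef]; ring
          rw [hHL]
          calc A ^ 2 * L ^ 2 * ((J' : ℝ) * (T ^ 2)⁻¹ +
                (9 * B ^ (3/2 : ℝ) * c₀) * (Real.sqrt T)⁻¹)
              = A ^ 2 * (L ^ 2 * ((J' : ℝ) * (T ^ 2)⁻¹ +
                (9 * B ^ (3/2 : ℝ) * c₀) * (Real.sqrt T)⁻¹)) := by ring
            _ ≤ A ^ 2 * 1 := mul_le_mul_of_nonneg_left key (sq_nonneg A)
            _ = A ^ 2 := mul_one _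
  -- conclude
  have hzz : ((x : ℂ) + (A : ℂ) * ((Real.log |x| : ℝ) : ℂ) * Complex.I) = z := by
    rw [hzdef, hLdef, hydef]
  calc |∫ t in Set.Ioi (|x| * Real.log |x|),
          (nDisc lam (x : ℂ) t -
            nDisc lam ((x : ℂ) + (A : ℂ) * (Real.log |x| : ℂ) * Complex.I) t) / t|
      = ‖∫ t in Set.Ioi T, (nDisc lam (x : ℂ) t - nDisc lam z t) / t‖ := by
        rw [Real.norm_eq_abs, hzz]
    _ ≤ (∫⁻ t in Set.Ioi T,
          ENNReal.ofReal ‖(nDisc lam (x : ℂ) t - nDisc lam z t) / t‖).toReal :=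
        norm_integral_le_lintegral_norm _
    _ ≤ (ENNReal.ofReal (A ^ 2)).toReal := ENNReal.toReal_mono ENNReal.ofReal_ne_top hint
    _ = 1 * A ^ 2 := by rw [ENNReal.toReal_ofReal (by positivity), one_mul]
end

section
/- For a positive increasing sequence {λ_j} of finite upper density and x ≥ x₀ > 0, A > 0, the sum Σ_{λ_j ≥ x + x ln x} ∫_{λ_j − x}^{√(λ_j² + A² ln²x) − x} dt/t is bounded by C₀·A² for a constant C₀ depending only on {λ_j}, using √(λ² + A²ln²x) − λ ≤ A²ln²x/(2λ) and λ_j − x ≥ x ln x. -/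
open Filter MeasureTheory

set_option maxHeartbeats 1000000 in
theorem stmt12 (lam : ℕ → ℝ) (hpos : ∀ j, 0 < lam j) (hmono : Monotone lam)
    (hupdens : ∃ D : ℝ, ∀ j : ℕ, (j : ℝ) ≤ D * lam j + D) :
    ∃ C₀ x₀ : ℝ, 0 < C₀ ∧ 0 < x₀ ∧ ∀ x : ℝ, x₀ ≤ x → ∀ A > (0 : ℝ),
      (∑' j : {j : ℕ | x + x * Real.log x ≤ lam j},
          ∫ t in Set.Ioc (lam j - x)
            (Real.sqrt ((lam j) ^ 2 + A ^ 2 * (Real.log x) ^ 2) - x), 1 / t) ≤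
        C₀ * A ^ 2 := by
  obtain ⟨D, hD⟩ := hupdens
  set E := max D 1 with hE
  have hE1 : (1:ℝ) ≤ E := le_max_right _ _
  have hDE : D ≤ E := le_max_left _ _
  refine ⟨8 * E, 3, by linarith, by norm_num, ?_⟩
  intro x hx A hA
  set L := Real.log x with hLdef
  have hx1 : (1:ℝ) < x := by linarith
  have hL1 : (1:ℝ) ≤ L := by
    have h3 : Real.exp 1 ≤ 3 := by
      have := Real.exp_one_lt_d9; linarith
    calc (1:ℝ) = Real.log (Real.exp 1) := (Real.log_exp 1).symm
    _ ≤ L := Real.log_le_log (Real.exp_pos 1) (by linarith)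
  have hLx : L ≤ x := by
    have := Real.log_le_sub_one_of_pos (by linarith : (0:ℝ) < x); linarith
  set y := x + x * L with hy
  set z := y - 1 with hz
  have hzxL : x * L ≤ z := by nlinarith
  have hz1 : (1:ℝ) ≤ z := by nlinarith
  set c := z * E with hc
  have hc1 : (1:ℝ) ≤ c := by nlinarith
  set K := 4 * A ^ 2 * L ^ 2 * E ^ 2 with hK
  have hKpos : 0 < K := by positivity
  set h : ℕ → ℝ := fun j => K * (1 / (c + j) ^ 2) with hh
  have hcj : ∀ j : ℕ, (1:ℝ) ≤ c + j := fun j => by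
    have : (0:ℝ) ≤ (j:ℝ) := Nat.cast_nonneg j; linarith
  have hcjpos : ∀ j : ℕ, (0:ℝ) < c + j := fun j => lt_of_lt_of_le one_pos (hcj j)
  -- key pointwise bound
  have key : ∀ j : ℕ, y ≤ lam j →
      (∫ t in Set.Ioc (lam j - x)
        (Real.sqrt ((lam j) ^ 2 + A ^ 2 * L ^ 2) - x), 1 / t) ≤ h j := by
    intro j hyj
    have hlpos : 0 < lam j := hpos j
    have hl2x : 2 * x ≤ lam j := by nlinarith
    have ha0 : 0 < lam j - x := by linarith
    set l := lam j with hl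
    set s := Real.sqrt (l ^ 2 + A ^ 2 * L ^ 2) with hs
    have hs2l : s * (2 * l) ≤ 2 * l ^ 2 + A ^ 2 * L ^ 2 := by
      have h1 : l ^ 2 + A ^ 2 * L ^ 2 ≤ ((2 * l ^ 2 + A ^ 2 * L ^ 2) / (2 * l)) ^ 2 := by
        rw [div_pow, le_div_iff₀ (by positivity)]
        nlinarith [sq_nonneg (A ^ 2 * L ^ 2), sq_nonneg l]
      have h2 : s ≤ (2 * l ^ 2 + A ^ 2 * L ^ 2) / (2 * l) := by
        calc s ≤ Real.sqrt (((2 * l ^ 2 + A ^ 2 * L ^ 2) / (2 * l)) ^ 2) :=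
              Real.sqrt_le_sqrt h1
        _ = (2 * l ^ 2 + A ^ 2 * L ^ 2) / (2 * l) := Real.sqrt_sq (by positivity)
      rw [← le_div_iff₀ (by positivity : (0:ℝ) < 2 * l)]
      exact h2
    have hstep : (∫ t in Set.Ioc (l - x) (s - x), 1 / t) ≤ A ^ 2 * L ^ 2 / l ^ 2 := by
      rcases le_or_gt (s - x) (l - x) with hba | hab
      · rw [Set.Ioc_eq_empty (not_lt.mpr hba), MeasureTheory.setIntegral_empty]
        positivity
      · have hbpos : 0 < s - x := lt_trans ha0 hab
        rw [← intervalIntegral.integral_of_le hab.le]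
        simp only [one_div]
        rw [integral_inv (Set.notMem_uIcc_of_lt ha0 hbpos)]
        have hlog := Real.log_le_sub_one_of_pos (div_pos hbpos ha0)
        have hdiv : (s - x) / (l - x) - 1 ≤ A ^ 2 * L ^ 2 / l ^ 2 := by
          rw [div_sub_one (ne_of_gt ha0), div_le_div_iff₀ ha0 (by positivity)]
          nlinarith [mul_le_mul_of_nonneg_right hs2l hlpos.le, sq_nonneg A,
            sq_nonneg L, mul_nonneg (sq_nonneg A) (sq_nonneg L)]
        linarith
    refine hstep.trans ?_
    have hjle : (j : ℝ) ≤ E * l + E := by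
      have h1 := hD j
      have h2 : D * l ≤ E * l := mul_le_mul_of_nonneg_right hDE hlpos.le
      linarith
    have hcl : c + j ≤ 2 * E * l := by
      have hcz : c ≤ (l - 1) * E := by
        have : z ≤ l - 1 := by simp only [hz, hy] at *; linarith
        nlinarith
      nlinarith
    simp only [hh]
    rw [mul_one_div, div_le_div_iff₀ (by positivity) (by positivity)]
    have h0 : (0:ℝ) < c + j := hcjpos j
    have h2 : (c + j) ^ 2 ≤ (2 * E * l) ^ 2 := by nlinarith
    have h3 : A ^ 2 * L ^ 2 * (c + j) ^ 2 ≤ A ^ 2 * L ^ 2 * (2 * E * l) ^ 2 :=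
      mul_le_mul_of_nonneg_left h2 (mul_nonneg (sq_nonneg A) (sq_nonneg L))
    have h4 : A ^ 2 * L ^ 2 * (2 * E * l) ^ 2 = K * l ^ 2 := by rw [hK]; ring
    linarith
  -- summability
  have hs2 : Summable (fun j : ℕ => (1:ℝ) / (c + j) ^ 2) := by
    have hbase : Summable (fun n : ℕ => (1:ℝ) / ((n:ℝ) + 1) ^ 2) := by
      have := (summable_nat_add_iff (f := fun n : ℕ => (1:ℝ) / (n:ℝ) ^ 2) 1).mpr
        (Real.summable_one_div_nat_pow.mpr one_lt_two)
      simpa [Nat.cast_add] using this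
    refine Summable.of_nonneg_of_le (fun j => by positivity) (fun j => ?_) hbase
    apply div_le_div_of_nonneg_left one_pos.le (by positivity)
    have := hcj j
    nlinarith [Nat.cast_nonneg (α := ℝ) j]
  have hsumh : Summable h := hs2.mul_left K
  -- telescoping bound
  have htel : HasSum (fun j : ℕ => 2 / (c + j) - 2 / (c + j + 1)) (2 / c) := by
    rw [hasSum_iff_tendsto_nat_of_nonneg]
    · have hps : ∀ n : ℕ, ∑ i ∈ Finset.range n, (2 / (c + i) - 2 / (c + i + 1))
          = 2 / c - 2 / (c + n) := by
        intro n
        have := Finset.sum_range_sub' (f := fun i : ℕ => 2 / (c + i)) n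
        simpa [Nat.cast_add, add_assoc] using this
      simp only [hps]
      have htend : Tendsto (fun n : ℕ => 2 / (c + n)) atTop (nhds 0) := by
        apply Tendsto.div_atTop tendsto_const_nhds
        exact tendsto_atTop_add_const_left _ c tendsto_natCast_atTop_atTop
      have := tendsto_const_nhds (x := 2 / c) (f := atTop (α := ℕ)) |>.sub htend
      simpa using this
    · intro i
      have h1 := hcjpos i
      have h2 : (0:ℝ) < c + i + 1 := by linarith
      have : 2 / (c + i + 1) ≤ 2 / (c + i) := by
        apply div_le_div_of_nonneg_left (by norm_num) h1; linarith
      linarith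
  have hsum1 : (∑' j : ℕ, (1:ℝ) / (c + j) ^ 2) ≤ 2 / c := by
    have hle : ∀ j : ℕ, (1:ℝ) / (c + j) ^ 2 ≤ 2 / (c + j) - 2 / (c + j + 1) := by
      intro j
      have h1 := hcjpos j
      have h2 : (0:ℝ) < c + j + 1 := by linarith
      have heq : 2 / (c + j) - 2 / (c + j + 1) = 2 / ((c + j) * (c + j + 1)) := by
        field_simp; ring
      rw [heq, div_le_div_iff₀ (by positivity) (by positivity)]
      have := hcj j
      nlinarith
    calc (∑' j : ℕ, (1:ℝ) / (c + j) ^ 2)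
        ≤ ∑' j : ℕ, (2 / (c + j) - 2 / (c + j + 1)) :=
          Summable.tsum_le_tsum hle hs2 htel.summable
    _ = 2 / c := htel.tsum_eq
  -- integral nonnegativity on the subtype
  have hnonneg : ∀ b : {j : ℕ | y ≤ lam j},
      0 ≤ ∫ t in Set.Ioc (lam b - x)
        (Real.sqrt ((lam b) ^ 2 + A ^ 2 * L ^ 2) - x), 1 / t := by
    intro b
    apply setIntegral_nonneg measurableSet_Ioc
    intro t ht
    have hb2 : y ≤ lam b := b.2
    have : 0 < t := by
      have h1 := ht.1
      have : 0 < lam (b : ℕ) - x := by nlinarith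
      linarith
    positivity
  have hsummf : Summable (fun b : {j : ℕ | y ≤ lam j} =>
      ∫ t in Set.Ioc (lam b - x)
        (Real.sqrt ((lam b) ^ 2 + A ^ 2 * L ^ 2) - x), 1 / t) := by
    refine Summable.of_nonneg_of_le hnonneg (fun b => key b b.2) ?_
    exact hsumh.comp_injective Subtype.val_injective
  calc (∑' b : {j : ℕ | y ≤ lam j},
        ∫ t in Set.Ioc (lam b - x)
          (Real.sqrt ((lam b) ^ 2 + A ^ 2 * L ^ 2) - x), 1 / t)
      ≤ ∑' j : ℕ, h j := by
        refine Summable.tsum_le_tsum_of_inj Subtype.val Subtype.val_injective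
          (fun n _ => by rw [hh]; positivity) (fun b => key b b.2) hsummf hsumh
    _ = K * ∑' j : ℕ, (1:ℝ) / (c + j) ^ 2 := tsum_mul_left
    _ ≤ K * (2 / c) := mul_le_mul_of_nonneg_left hsum1 hKpos.le
    _ ≤ 8 * E * A ^ 2 := by
        have hmul : K * (2 / c) = 2 * K / c := by ring
        rw [hmul, div_le_iff₀ (by positivity : (0:ℝ) < c)]
        have hL2z : L ^ 2 ≤ z := by nlinarith
        have : 8 * A ^ 2 * E ^ 2 * L ^ 2 ≤ 8 * A ^ 2 * E ^ 2 * z :=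
          mul_le_mul_of_nonneg_left hL2z (by positivity)
        nlinarith
end
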